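/- arXiv:math/0611916 — 6 statements merged into one kernel-verified Lean document; each statement's English description precedes it below -/
import Mathlib

section
/- Let t be a self-adjoint (hence regular) operator on a Hilbert space E. Then the operator 1 + t*t has dense range; in fact it is surjective. -/
/-!
Von Neumann's argument: since `T` is closed, its graph `G` is a closed subspace of `E ⊕₂ F`, so
`(y, 0) = (x, T x) + (y - x, -T x)` with the second summand orthogonal to `G`. Orthogonality to
`G` says exactly that `⟪T a, T x⟫ = ⟪a, y - x⟫` for all `a` in the domain of `T`, i.e. that
`T x ∈ dom T†` and `T† (T x) = y - x`.
-/

open WithLp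

namespace LinearPMap

variable {𝕜 E F : Type*} [RCLike 𝕜] [NormedAddCommGroup E] [InnerProductSpace 𝕜 E]
  [NormedAddCommGroup F] [InnerProductSpace 𝕜 F]

noncomputable def graphL2 (T : E →ₗ.[𝕜] F) : Submodule 𝕜 (WithLp 2 (E × F)) :=
  T.graph.map (WithLp.linearEquiv 2 𝕜 (E × F)).symm.toLinearMap

theorem mem_graphL2_iff (T : E →ₗ.[𝕜] F) (p : WithLp 2 (E × F)) :
    p ∈ T.graphL2 ↔ ofLp p ∈ T.graph := by
  simp [graphL2]

theorem isClosed_graphL2 {T : E →ₗ.[𝕜] F} (hT : T.IsClosed) :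
    _root_.IsClosed (T.graphL2 : Set (WithLp 2 (E × F))) := by
  have hpre : (T.graphL2 : Set (WithLp 2 (E × F))) = ofLp ⁻¹' T.graph := by
    ext p
    exact mem_graphL2_iff T p
  rw [hpre]
  exact hT.preimage (prod_continuous_ofLp 2 E F)

theorem mem_graph_adjoint_of_mem_orthogonal_graphL2 [CompleteSpace E] {T : E →ₗ.[𝕜] F}
    (hT : Dense (T.domain : Set E)) {p : WithLp 2 (E × F)} (hp : p ∈ T.graphL2ᗮ) :
    (p.snd, -p.fst) ∈ T†.graph := by
  rw [adjoint_graph_eq_graph_adjoint hT, Submodule.mem_adjoint_iff]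
  intro a b hab
  have hperp := Submodule.inner_right_of_mem_orthogonal
    ((mem_graphL2_iff T (toLp 2 (a, b))).2 hab) hp
  rw [prod_inner_apply] at hperp
  simpa [inner_neg_right, sub_neg_eq_add, add_comm] using hperp

theorem exists_add_adjoint_apply_eq [CompleteSpace E] [CompleteSpace F] {T : E →ₗ.[𝕜] F}
    (hT : Dense (T.domain : Set E)) (hTc : T.IsClosed) (y : E) :
    ∃ (x : T.domain) (hx : T x ∈ T†.domain), (x : E) + T† ⟨T x, hx⟩ = y := by
  have : CompleteSpace T.graphL2 := (isClosed_graphL2 hTc).completeSpace_coe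
  obtain ⟨g, hg, h, hh, hgh⟩ := T.graphL2.exists_add_mem_mem_orthogonal (toLp 2 (y, 0))
  obtain ⟨x, hgx, hgTx⟩ := T.mem_graph_iff.1 ((mem_graphL2_iff T g).1 hg)
  obtain rfl : h = toLp 2 (y, 0) - g := eq_sub_of_add_eq' hgh.symm
  have hfst : (toLp 2 (y, 0) - g).fst = y - x := by simp [hgx]
  have hsnd : (toLp 2 (y, 0) - g).snd = -T x := by simp [hgTx]
  have hadj : (T x, y - x) ∈ T†.graph := by
    simpa [hfst, hsnd] using neg_mem (mem_graph_adjoint_of_mem_orthogonal_graphL2 hT hh)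
  obtain ⟨⟨_, hTx⟩, rfl, hTTx⟩ := T†.mem_graph_iff.1 hadj
  exact ⟨x, hTx, by rw [hTTx, add_sub_cancel]⟩

end LinearPMap

/-- If `t` is a self-adjoint operator on a Hilbert space `E`, then `1 + t*t`
has dense range; in fact it is surjective. -/
theorem one_add_adjoint_mul_self_surjective
    {E : Type*} [NormedAddCommGroup E] [InnerProductSpace ℂ E] [CompleteSpace E]
    (t : E →ₗ.[ℂ] E) (hsa : IsSelfAdjoint t) :
    Dense {y : E | ∃ x : E, ∃ hx : x ∈ t.domain, ∃ hx' : t ⟨x, hx⟩ ∈ t.adjoint.domain,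
        x + t.adjoint ⟨t ⟨x, hx⟩, hx'⟩ = y} ∧
      ∀ y : E, ∃ x : E, ∃ hx : x ∈ t.domain, ∃ hx' : t ⟨x, hx⟩ ∈ t.adjoint.domain,
        x + t.adjoint ⟨t ⟨x, hx⟩, hx'⟩ = y := by
  have hsurj : ∀ y : E, ∃ x : E, ∃ hx : x ∈ t.domain, ∃ hx' : t ⟨x, hx⟩ ∈ t.adjoint.domain,
      x + t.adjoint ⟨t ⟨x, hx⟩, hx'⟩ = y := fun y ↦ by
    obtain ⟨⟨x, hx⟩, hx', hxy⟩ :=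
      LinearPMap.exists_add_adjoint_apply_eq hsa.dense_domain hsa.isClosed y
    exact ⟨x, hx, hx', hxy⟩
  exact ⟨Set.eq_univ_of_forall hsurj ▸ dense_univ, hsurj⟩
end

section
/- Let t be a closed densely defined operator on a Hilbert space E. The bounded transform F_t = t(1 + t*t)^{-1/2} is a bounded operator with ‖F_t‖ ≤ 1. -/
/-!
By the closed graph theorem `t ∘ Q` is bounded, since `Q` is bounded with range in the domain of
the closed operator `t`. For `z = Q² y` one has `y = z + t*t z`, so pairing with `z` and using the
symmetry of `Q` gives `‖Q y‖² = ‖z‖² + ‖t z‖²`, i.e. `‖(t ∘ Q) (Q y)‖ ≤ ‖Q y‖`. This bound passes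
by continuity from the range of `Q` to all of `E`: the range is dense because `Q` is symmetric and
injective (`Q²` is a right inverse of `1 + t*t`).
-/

open scoped InnerProductSpace

namespace LinearPMap

section ClosedGraph

variable {𝕜 E F G : Type*} [NontriviallyNormedField 𝕜]
  [NormedAddCommGroup E] [NormedSpace 𝕜 E] [NormedAddCommGroup F] [NormedSpace 𝕜 F]
  [NormedAddCommGroup G] [NormedSpace 𝕜 G]

theorem IsClosed.isClosed_graph_comp_codRestrict {t : F →ₗ.[𝕜] G} (ht : t.IsClosed)
    (Q : E →L[𝕜] F) (hQ : ∀ x, Q x ∈ t.domain) :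
    _root_.IsClosed ((t.toFun ∘ₗ (Q : E →ₗ[𝕜] F).codRestrict t.domain hQ).graph : Set (E × G)) := by
  have hgraph : ((t.toFun ∘ₗ (Q : E →ₗ[𝕜] F).codRestrict t.domain hQ).graph : Set (E × G))
      = Prod.map Q id ⁻¹' t.graph := by
    ext ⟨x, y⟩
    simp only [Set.mem_preimage, SetLike.mem_coe, LinearMap.mem_graph_iff, mem_graph_iff,
      Prod.map_apply, id_eq]
    refine ⟨fun h => ⟨_, rfl, h.symm⟩, ?_⟩
    rintro ⟨z, hz, rfl⟩
    exact congrArg t (Subtype.ext hz)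
  rw [hgraph]
  exact ht.preimage (by fun_prop)

variable [CompleteSpace E] [CompleteSpace G]

noncomputable def IsClosed.compOfMapsTo {t : F →ₗ.[𝕜] G} (ht : t.IsClosed) (Q : E →L[𝕜] F)
    (hQ : ∀ x, Q x ∈ t.domain) : E →L[𝕜] G :=
  .ofIsClosedGraph (ht.isClosed_graph_comp_codRestrict Q hQ)

@[simp]
theorem IsClosed.compOfMapsTo_apply {t : F →ₗ.[𝕜] G} (ht : t.IsClosed) (Q : E →L[𝕜] F)
    (hQ : ∀ x, Q x ∈ t.domain) (x : E) : ht.compOfMapsTo Q hQ x = t ⟨Q x, hQ x⟩ :=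
  rfl

end ClosedGraph

section Adjoint

variable {𝕜 E F : Type*} [RCLike 𝕜] [NormedAddCommGroup E] [InnerProductSpace 𝕜 E]
  [NormedAddCommGroup F] [InnerProductSpace 𝕜 F] [CompleteSpace E] {t : E →ₗ.[𝕜] F}

theorem inner_add_adjoint_apply_self (hdense : Dense (t.domain : Set E)) (z : t.domain)
    (hz : t z ∈ t.adjoint.domain) :
    ⟪(z : E) + t.adjoint ⟨t z, hz⟩, z⟫_𝕜 = ((‖(z : E)‖ ^ 2 + ‖t z‖ ^ 2 : ℝ) : 𝕜) := by
  rw [inner_add_left, t.adjoint_isFormalAdjoint hdense ⟨t z, hz⟩ z, inner_self_eq_norm_sq_to_K,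
    inner_self_eq_norm_sq_to_K]
  push_cast
  rfl

theorem injective_of_rightInverse_one_add_adjoint_comp {R : E → E}
    (hR : ∀ x, ∃ h₁ : R x ∈ t.domain, ∃ h₂ : t ⟨R x, h₁⟩ ∈ t.adjoint.domain,
      R x + t.adjoint ⟨t ⟨R x, h₁⟩, h₂⟩ = x) :
    Function.Injective R := by
  intro x y hxy
  obtain ⟨_, _, hx⟩ := hR x
  obtain ⟨_, _, hy⟩ := hR y
  rw [← hx, ← hy]
  simp only [hxy]

theorem norm_apply_le_of_isSelfAdjoint (hdense : Dense (t.domain : Set E)) {Q : E →L[𝕜] E}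
    (hQ : IsSelfAdjoint Q) (y : E) (h₁ : Q (Q y) ∈ t.domain)
    (h₂ : t ⟨Q (Q y), h₁⟩ ∈ t.adjoint.domain)
    (hy : Q (Q y) + t.adjoint ⟨t ⟨Q (Q y), h₁⟩, h₂⟩ = y) :
    ‖t ⟨Q (Q y), h₁⟩‖ ≤ ‖Q y‖ := by
  have key : ⟪y, Q (Q y)⟫_𝕜 = _ := hy ▸ t.inner_add_adjoint_apply_self hdense ⟨Q (Q y), h₁⟩ h₂
  rw [← show ⟪Q y, Q y⟫_𝕜 = ⟪y, Q (Q y)⟫_𝕜 from hQ.isSymmetric y (Q y),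
    inner_self_eq_norm_sq_to_K] at key
  have hsq : ‖Q y‖ ^ 2 = ‖Q (Q y)‖ ^ 2 + ‖t ⟨Q (Q y), h₁⟩‖ ^ 2 := by exact_mod_cast key
  nlinarith [norm_nonneg (Q y), norm_nonneg (t ⟨Q (Q y), h₁⟩), sq_nonneg ‖Q (Q y)‖]

end Adjoint

end LinearPMap

theorem LinearMap.IsSymmetric.denseRange_of_injective {𝕜 E : Type*} [RCLike 𝕜]
    [NormedAddCommGroup E] [InnerProductSpace 𝕜 E] [CompleteSpace E] {T : E →ₗ[𝕜] E}
    (hT : T.IsSymmetric) (hinj : Function.Injective T) : DenseRange T := by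
  rw [DenseRange, ← LinearMap.coe_range, Submodule.dense_iff_topologicalClosure_eq_top,
    Submodule.topologicalClosure_eq_top_iff, hT.orthogonal_range, LinearMap.ker_eq_bot.mpr hinj]

/-- For a closed densely defined operator `t` on a Hilbert space `E`, the
bounded transform `F_t = t ∘ (1 + t*t)^{-1/2}` is a bounded (everywhere defined) operator
with `‖F_t‖ ≤ 1`.  Here `Q` plays the role of `(1 + t*t)^{-1/2}`: it is the (unique)
positive bounded operator whose square is the inverse of `1 + t*t`. -/
theorem boundedTransform_norm_le_one
    {E : Type*} [NormedAddCommGroup E] [InnerProductSpace ℂ E] [CompleteSpace E]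
    (t : E →ₗ.[ℂ] E) (hdense : Dense (t.domain : Set E)) (hclosed : t.IsClosed)
    (Q : E →L[ℂ] E) (hQpos : Q.IsPositive)
    (hQdom : ∀ x : E, Q x ∈ t.domain)
    (hQsq : ∀ x : E, ∃ h1 : Q (Q x) ∈ t.domain,
      ∃ h2 : t ⟨Q (Q x), h1⟩ ∈ t.adjoint.domain,
        Q (Q x) + t.adjoint ⟨t ⟨Q (Q x), h1⟩, h2⟩ = x) :
    ∃ F : E →L[ℂ] E, (∀ x : E, F x = t ⟨Q x, hQdom x⟩) ∧ ‖F‖ ≤ 1 := by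
  have hQinj : Function.Injective Q :=
    (t.injective_of_rightInverse_one_add_adjoint_comp (R := Q ∘ Q) hQsq).of_comp
  have hQdense : DenseRange Q := hQpos.isSelfAdjoint.isSymmetric.denseRange_of_injective hQinj
  refine ⟨hclosed.compOfMapsTo Q hQdom, hclosed.compOfMapsTo_apply Q hQdom,
    ContinuousLinearMap.opNorm_le_bound _ zero_le_one fun x => ?_⟩
  rw [one_mul]
  refine hQdense.induction_on x (isClosed_le (by fun_prop) (by fun_prop)) fun y => ?_
  obtain ⟨h₁, h₂, hy⟩ := hQsq y
  exact t.norm_apply_le_of_isSelfAdjoint hdense hQpos.isSelfAdjoint y h₁ h₂ hy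
end

section
/- Let t be a closed densely defined operator on a Hilbert space E with bounded transform F_t. Then Q_t := (1 + t*t)^{-1/2} satisfies Q_t = (1 - F_t* F_t)^{1/2}. -/
/-!
Since `t*t Q² = 1 - Q²` on all of `E` and `F*F = Q t*t Q` on the range of `Q`, the self-adjoint
operator `A := Q² + F*F` satisfies `A Q = Q`, hence also `Q A = Q` after taking adjoints.
`Q` is injective because `x` is recovered from `Q² x`, so `A = 1`, i.e. `1 - F*F = Q²`, and
`Q ≥ 0` is the square root of its own square.
-/

open scoped InnerProductSpace

namespace ContinuousLinearMap

variable {𝕜 E : Type*} [RCLike 𝕜] [NormedAddCommGroup E] [InnerProductSpace 𝕜 E] [CompleteSpace E]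

theorem eq_one_of_mul_eq_right_of_injective {A Q : E →L[𝕜] E} (hA : IsSelfAdjoint A)
    (hQ : IsSelfAdjoint Q) (hAQ : A * Q = Q) (hinj : Function.Injective Q) : A = 1 := by
  have hQA : Q * A = Q := by simpa only [star_mul, hA.star_eq, hQ.star_eq] using congr_arg star hAQ
  ext x
  exact hinj congr($hQA x)

end ContinuousLinearMap

namespace LinearPMap

variable {𝕜 E : Type*} [RCLike 𝕜] [NormedAddCommGroup E] [InnerProductSpace 𝕜 E] [CompleteSpace E]

theorem injective_of_sq_add_adjoint_comp_eq (t : E →ₗ.[𝕜] E) (Q : E →L[𝕜] E)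
    (hQsq : ∀ x : E, ∃ h1 : Q (Q x) ∈ t.domain,
      ∃ h2 : t ⟨Q (Q x), h1⟩ ∈ t.adjoint.domain,
        Q (Q x) + t.adjoint ⟨t ⟨Q (Q x), h1⟩, h2⟩ = x) :
    Function.Injective Q := by
  refine (injective_iff_map_eq_zero Q).mpr fun x hx => ?_
  obtain ⟨h1, h2, heq⟩ := hQsq x
  have hQQ : (⟨Q (Q x), h1⟩ : t.domain) = 0 := Subtype.ext (by simp [hx])
  have ht : (⟨t ⟨Q (Q x), h1⟩, h2⟩ : t.adjoint.domain) = 0 := Subtype.ext (by simp [hQQ])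
  rw [← heq, ht, hx]
  simp

theorem sq_add_adjoint_mul_mul_eq (t : E →ₗ.[𝕜] E) (hdense : Dense (t.domain : Set E))
    (Q : E →L[𝕜] E) (hQ : IsSelfAdjoint Q) (hQdom : ∀ x : E, Q x ∈ t.domain)
    (hQsq : ∀ x : E, ∃ h1 : Q (Q x) ∈ t.domain,
      ∃ h2 : t ⟨Q (Q x), h1⟩ ∈ t.adjoint.domain,
        Q (Q x) + t.adjoint ⟨t ⟨Q (Q x), h1⟩, h2⟩ = x)
    (F : E →L[𝕜] E) (hF : ∀ x : E, F x = t ⟨Q x, hQdom x⟩) :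
    (Q * Q + ContinuousLinearMap.adjoint F * F) * Q = Q := by
  have hQsym : ∀ x y : E, ⟪Q x, y⟫_𝕜 = ⟪x, Q y⟫_𝕜 := hQ.isSymmetric
  ext x
  obtain ⟨h1, h2, heq⟩ := hQsq x
  refine ext_inner_right 𝕜 fun y => ?_
  have hFQ : F (Q x) = t ⟨Q (Q x), h1⟩ := hF (Q x)
  calc ⟪Q (Q (Q x)) + ContinuousLinearMap.adjoint F (F (Q x)), y⟫_𝕜
      = ⟪Q (Q x), Q y⟫_𝕜 + ⟪t ⟨Q (Q x), h1⟩, t ⟨Q y, hQdom y⟩⟫_𝕜 := by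
        rw [inner_add_left, hQsym, ContinuousLinearMap.adjoint_inner_left, hF y, hFQ]
    _ = ⟪x, Q y⟫_𝕜 := by
        rw [← adjoint_isFormalAdjoint hdense ⟨_, h2⟩ ⟨Q y, hQdom y⟩, ← inner_add_left, heq]
    _ = ⟪Q x, y⟫_𝕜 := (hQsym x y).symm

end LinearPMap

theorem resolvent_sqrt_eq_sqrt_one_sub_adjoint_mul_general
    {E : Type*} [NormedAddCommGroup E] [InnerProductSpace ℂ E] [CompleteSpace E]
    (t : E →ₗ.[ℂ] E) (hdense : Dense (t.domain : Set E))
    (Q : E →L[ℂ] E) (hQpos : Q.IsPositive)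
    (hQdom : ∀ x : E, Q x ∈ t.domain)
    (hQsq : ∀ x : E, ∃ h1 : Q (Q x) ∈ t.domain,
      ∃ h2 : t ⟨Q (Q x), h1⟩ ∈ t.adjoint.domain,
        Q (Q x) + t.adjoint ⟨t ⟨Q (Q x), h1⟩, h2⟩ = x)
    (F : E →L[ℂ] E) (hF : ∀ x : E, F x = t ⟨Q x, hQdom x⟩) :
    Q = CFC.sqrt (1 - ContinuousLinearMap.adjoint F * F) := by
  have hQ : IsSelfAdjoint Q := hQpos.isSelfAdjoint
  have hA : IsSelfAdjoint (Q * Q + ContinuousLinearMap.adjoint F * F) :=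
    (hQ.star_eq ▸ IsSelfAdjoint.star_mul_self Q).add (IsSelfAdjoint.star_mul_self F)
  have hone : Q * Q + ContinuousLinearMap.adjoint F * F = 1 :=
    ContinuousLinearMap.eq_one_of_mul_eq_right_of_injective hA hQ
      (t.sq_add_adjoint_mul_mul_eq hdense Q hQ hQdom hQsq F hF)
      (t.injective_of_sq_add_adjoint_comp_eq Q hQsq)
  rw [← hone, add_sub_cancel_right,
    CFC.sqrt_mul_self Q ((ContinuousLinearMap.nonneg_iff_isPositive Q).mpr hQpos)]

/-- For a closed densely defined operator `t` on a Hilbert space `E` with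
bounded transform `F = t Q` where `Q = (1+t*t)^{-1/2}`, one has `Q = (1 - F*F)^{1/2}`. -/
theorem resolvent_sqrt_eq_sqrt_one_sub_adjoint_mul
    {E : Type*} [NormedAddCommGroup E] [InnerProductSpace ℂ E] [CompleteSpace E]
    (t : E →ₗ.[ℂ] E) (hdense : Dense (t.domain : Set E)) (hclosed : t.IsClosed)
    (Q : E →L[ℂ] E) (hQpos : Q.IsPositive)
    (hQdom : ∀ x : E, Q x ∈ t.domain)
    (hQsq : ∀ x : E, ∃ h1 : Q (Q x) ∈ t.domain,
      ∃ h2 : t ⟨Q (Q x), h1⟩ ∈ t.adjoint.domain,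
        Q (Q x) + t.adjoint ⟨t ⟨Q (Q x), h1⟩, h2⟩ = x)
    (F : E →L[ℂ] E) (hF : ∀ x : E, F x = t ⟨Q x, hQdom x⟩) :
    Q = CFC.sqrt (1 - ContinuousLinearMap.adjoint F * F) :=
  resolvent_sqrt_eq_sqrt_one_sub_adjoint_mul_general t hdense Q hQpos hQdom hQsq F hF
end

section
/- Let t be a closed densely defined operator on a Hilbert space E with bounded transform F_t. Then t is 'Fredholm' in the sense that Ran t is closed and Ker t, Ker t* are finite dimensional, if and only if F_t is a Fredholm bounded operator. -/
/-!
Write `Q = (1 + t† t)^{-1/2}`, so that `F = t Q`. Pairing `z = Q² z + t† t Q² z` with `x ∈ dom t`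
gives `x = Q (Q x + F† t x)`. Hence `Ran t = Ran F`, so `ker F† = (Ran F)ᗮ = (Ran t)ᗮ = ker t†`,
and the injective operator `Q` maps `ker F` onto `ker t` (for `t x = 0` the identity reads
`x = Q (Q x)`).
-/

open scoped InnerProductSpace

namespace LinearPMap

variable {𝕜 E E' : Type*} [RCLike 𝕜] [NormedAddCommGroup E] [InnerProductSpace 𝕜 E]
  [CompleteSpace E] [NormedAddCommGroup E'] [InnerProductSpace 𝕜 E']

theorem mem_map_ker_adjoint_iff {t : E →ₗ.[𝕜] E'} (hdense : Dense (t.domain : Set E)) (y : E') :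
    y ∈ (LinearMap.ker t.adjoint.toFun).map t.adjoint.domain.subtype ↔
      ∀ x : t.domain, ⟪y, t x⟫_𝕜 = 0 := by
  constructor
  · rintro ⟨u, hu, rfl⟩ x
    have hu : t.adjoint u = 0 := hu
    simp [← adjoint_isFormalAdjoint hdense u x, hu]
  · intro h
    have hmem : y ∈ t.adjoint.domain := mem_adjoint_domain_of_exists y ⟨0, by simp [h]⟩
    exact ⟨⟨y, hmem⟩, adjoint_apply_eq hdense ⟨y, hmem⟩ (by simp [h]), rfl⟩

/-- `F = t Q` with `Q` in the role of `(1 + t† t)^{-1/2}`. -/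
structure IsBoundedTransform (t : E →ₗ.[𝕜] E') (Q : E →L[𝕜] E) (F : E →L[𝕜] E') : Prop where
  isSymmetric : (Q : E →ₗ[𝕜] E).IsSymmetric
  mem_domain : ∀ x : E, Q x ∈ t.domain
  sq_rightInverse : ∀ x : E, ∃ h1 : Q (Q x) ∈ t.domain,
    ∃ h2 : t ⟨Q (Q x), h1⟩ ∈ t.adjoint.domain, Q (Q x) + t.adjoint ⟨t ⟨Q (Q x), h1⟩, h2⟩ = x
  apply_eq : ∀ x : E, F x = t ⟨Q x, mem_domain x⟩

namespace IsBoundedTransform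

variable {t : E →ₗ.[𝕜] E'} {Q : E →L[𝕜] E} {F : E →L[𝕜] E'}

theorem injective (h : t.IsBoundedTransform Q F) : Function.Injective Q := by
  intro a b hab
  obtain ⟨_, _, ha⟩ := h.sq_rightInverse a
  obtain ⟨_, _, hb⟩ := h.sq_rightInverse b
  rw [← ha, ← hb]
  simp only [hab]

variable [CompleteSpace E']

theorem eq_apply_add_adjoint_apply (h : t.IsBoundedTransform Q F)
    (hdense : Dense (t.domain : Set E)) (x : t.domain) :
    (x : E) = Q (Q x + F.adjoint (t x)) := by
  refine ext_inner_right 𝕜 fun z => ?_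
  obtain ⟨h1, h2, hz⟩ := h.sq_rightInverse z
  have hQ : ∀ a b : E, ⟪Q a, b⟫_𝕜 = ⟪a, Q b⟫_𝕜 := h.isSymmetric
  have hadj : ⟪(x : E), t.adjoint ⟨t ⟨Q (Q z), h1⟩, h2⟩⟫_𝕜 = ⟪t x, F (Q z)⟫_𝕜 := by
    rw [← inner_conj_symm, adjoint_isFormalAdjoint hdense, inner_conj_symm, h.apply_eq]
  calc ⟪(x : E), z⟫_𝕜
      = ⟪(x : E), Q (Q z)⟫_𝕜 + ⟪(x : E), t.adjoint ⟨t ⟨Q (Q z), h1⟩, h2⟩⟫_𝕜 := by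
        rw [← inner_add_right, hz]
    _ = ⟪Q x, Q z⟫_𝕜 + ⟪t x, F (Q z)⟫_𝕜 := by rw [hQ, hadj]
    _ = ⟪Q (Q x + F.adjoint (t x)), z⟫_𝕜 := by
        rw [hQ _ z, inner_add_left, ContinuousLinearMap.adjoint_inner_left]

theorem range_eq (h : t.IsBoundedTransform Q F) (hdense : Dense (t.domain : Set E)) :
    Set.range F = Set.range t := by
  ext y
  constructor
  · rintro ⟨z, rfl⟩
    exact ⟨_, (h.apply_eq z).symm⟩
  · rintro ⟨x, rfl⟩
    refine ⟨Q x + F.adjoint (t x), ?_⟩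
    rw [h.apply_eq]
    exact congrArg t (Subtype.ext (h.eq_apply_add_adjoint_apply hdense x).symm)

theorem map_ker_eq (h : t.IsBoundedTransform Q F) (hdense : Dense (t.domain : Set E)) :
    (LinearMap.ker (F : E →ₗ[𝕜] E')).map (Q : E →ₗ[𝕜] E) =
      (LinearMap.ker t.toFun).map t.domain.subtype := by
  ext y
  constructor
  · rintro ⟨x, hx, rfl⟩
    exact ⟨⟨Q x, h.mem_domain x⟩, (h.apply_eq x).symm.trans hx, rfl⟩
  · rintro ⟨x, hx, rfl⟩
    have hx : t x = 0 := hx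
    have hQQ : Q (Q x) = x := by
      simpa [hx] using (h.eq_apply_add_adjoint_apply hdense x).symm
    refine ⟨Q x, ?_, hQQ⟩
    show F (Q x) = 0
    rw [h.apply_eq, ← hx]
    exact congrArg t (Subtype.ext hQQ)

theorem ker_adjoint_eq (h : t.IsBoundedTransform Q F) (hdense : Dense (t.domain : Set E)) :
    LinearMap.ker (F.adjoint : E' →ₗ[𝕜] E) =
      (LinearMap.ker t.adjoint.toFun).map t.adjoint.domain.subtype := by
  ext y
  rw [mem_map_ker_adjoint_iff hdense, LinearMap.mem_ker, ContinuousLinearMap.coe_coe]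
  constructor
  · intro hy x
    obtain ⟨z, hz⟩ : t x ∈ Set.range F := h.range_eq hdense ▸ Set.mem_range_self x
    rw [← hz, ← ContinuousLinearMap.adjoint_inner_left, hy, inner_zero_left]
  · intro hy
    refine ext_inner_right 𝕜 fun z => ?_
    rw [ContinuousLinearMap.adjoint_inner_left, inner_zero_left, h.apply_eq, hy]

end IsBoundedTransform

end LinearPMap

theorem fredholm_iff_boundedTransform_fredholm_general
    {E : Type*} [NormedAddCommGroup E] [InnerProductSpace ℂ E] [CompleteSpace E]
    (t : E →ₗ.[ℂ] E) (hdense : Dense (t.domain : Set E))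
    (Q : E →L[ℂ] E) (hQpos : Q.IsPositive)
    (hQdom : ∀ x : E, Q x ∈ t.domain)
    (hQsq : ∀ x : E, ∃ h1 : Q (Q x) ∈ t.domain,
      ∃ h2 : t ⟨Q (Q x), h1⟩ ∈ t.adjoint.domain,
        Q (Q x) + t.adjoint ⟨t ⟨Q (Q x), h1⟩, h2⟩ = x)
    (F : E →L[ℂ] E) (hF : ∀ x : E, F x = t ⟨Q x, hQdom x⟩) :
    (IsClosed {y : E | ∃ x : E, ∃ hx : x ∈ t.domain, t ⟨x, hx⟩ = y} ∧
        FiniteDimensional ℂ ((LinearMap.ker t.toFun).map t.domain.subtype) ∧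
        FiniteDimensional ℂ ((LinearMap.ker t.adjoint.toFun).map t.adjoint.domain.subtype)) ↔
      (IsClosed (Set.range ⇑F) ∧ FiniteDimensional ℂ (LinearMap.ker (F : E →ₗ[ℂ] E)) ∧
        FiniteDimensional ℂ (LinearMap.ker (ContinuousLinearMap.adjoint F : E →ₗ[ℂ] E))) := by
  have h : t.IsBoundedTransform Q F := ⟨hQpos.isSymmetric, hQdom, hQsq, hF⟩
  have hran : {y : E | ∃ x : E, ∃ hx : x ∈ t.domain, t ⟨x, hx⟩ = y} = Set.range F := by
    rw [h.range_eq hdense]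
    ext
    simp
  have hker : FiniteDimensional ℂ (LinearMap.ker (F : E →ₗ[ℂ] E)) ↔
      FiniteDimensional ℂ ((LinearMap.ker t.toFun).map t.domain.subtype) := by
    rw [← h.map_ker_eq hdense]
    exact Module.Finite.equiv_iff (Submodule.equivMapOfInjective _ h.injective _)
  rw [hran, hker, h.ker_adjoint_eq hdense]

/-- A closed densely defined operator `t` on a Hilbert space `E` is Fredholm
(closed range and finite dimensional kernel and cokernel) if and only if its bounded
transform `F = t(1+t*t)^{-1/2}` is a Fredholm bounded operator. -/
theorem fredholm_iff_boundedTransform_fredholm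
    {E : Type*} [NormedAddCommGroup E] [InnerProductSpace ℂ E] [CompleteSpace E]
    (t : E →ₗ.[ℂ] E) (hdense : Dense (t.domain : Set E)) (hclosed : t.IsClosed)
    (Q : E →L[ℂ] E) (hQpos : Q.IsPositive)
    (hQdom : ∀ x : E, Q x ∈ t.domain)
    (hQsq : ∀ x : E, ∃ h1 : Q (Q x) ∈ t.domain,
      ∃ h2 : t ⟨Q (Q x), h1⟩ ∈ t.adjoint.domain,
        Q (Q x) + t.adjoint ⟨t ⟨Q (Q x), h1⟩, h2⟩ = x)
    (F : E →L[ℂ] E) (hF : ∀ x : E, F x = t ⟨Q x, hQdom x⟩) :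
    (IsClosed {y : E | ∃ x : E, ∃ hx : x ∈ t.domain, t ⟨x, hx⟩ = y} ∧
        FiniteDimensional ℂ ((LinearMap.ker t.toFun).map t.domain.subtype) ∧
        FiniteDimensional ℂ ((LinearMap.ker t.adjoint.toFun).map t.adjoint.domain.subtype)) ↔
      (IsClosed (Set.range ⇑F) ∧ FiniteDimensional ℂ (LinearMap.ker (F : E →ₗ[ℂ] E)) ∧
        FiniteDimensional ℂ (LinearMap.ker (ContinuousLinearMap.adjoint F : E →ₗ[ℂ] E))) :=
  fredholm_iff_boundedTransform_fredholm_general t hdense Q hQpos hQdom hQsq F hF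
end

section
/- Let t be a closed densely defined operator on a Hilbert space E whose range is closed and whose kernel and cokernel are finite dimensional. Then ind t := dim Ker t − dim Ker t* equals ind F_t, the Fredholm index of its bounded transform. -/
open LinearPMap

local notation "⟪" x ", " y "⟫" => @inner ℂ _ _ x y

/-! With `R = Q²` (morally `(1 + t† t)⁻¹`), the hypotheses say that `R w` represents `⟪w, ·⟫` in
the graph inner product of `t`: `⟪w, u⟫ = ⟪R w, u⟫ + ⟪t R w, t u⟫` for `u ∈ dom t`.
Testing this identity against `u ∈ Ker t`, and against `u = Q a`, shows that `Ker t` and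
`Ker F = Ker (t Q)` both consist of the fixed points of `R` (for `Ker F` one also needs `Q`
injective). The same identity shows that an element of `Ran t` orthogonal to `t (R E) ⊆ Ran F`
vanishes; since `Ran t` is closed, this gives `(Ran F)ᗮ = (Ran t)ᗮ`, that is `Ker F† = Ker t†`. -/

theorem LinearPMap.mem_map_ker_adjoint_iff_s13 {𝕜 E F : Type*} [RCLike 𝕜]
    [NormedAddCommGroup E] [InnerProductSpace 𝕜 E] [CompleteSpace E]
    [NormedAddCommGroup F] [InnerProductSpace 𝕜 F]
    {T : E →ₗ.[𝕜] F} (hT : Dense (T.domain : Set E)) (y : F) :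
    y ∈ (LinearMap.ker T†.toFun).map T†.domain.subtype ↔ y ∈ (LinearMap.range T.toFun)ᗮ := by
  rw [Submodule.mem_orthogonal']
  constructor
  · rintro ⟨v, hv, rfl⟩ _ ⟨x, rfl⟩
    have hv : T† v = 0 := hv
    rw [Submodule.coe_subtype, toFun_eq_coe, ← adjoint_isFormalAdjoint hT v x, hv,
      inner_zero_left]
  · intro hy
    have hy' : ∀ x : T.domain, inner 𝕜 (0 : E) (x : E) = inner 𝕜 y (T x) := fun x => by
      rw [inner_zero_left, ← hy _ ⟨x, rfl⟩, toFun_eq_coe]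
    exact ⟨⟨y, mem_adjoint_domain_of_exists y ⟨0, hy'⟩⟩, adjoint_apply_eq hT _ hy', rfl⟩

section BoundedTransform

variable {E : Type*} [NormedAddCommGroup E] [InnerProductSpace ℂ E]
  {t : E →ₗ.[ℂ] E} {Q : E →L[ℂ] E}

theorem injective_of_sq_add_adjoint_apply_eq [CompleteSpace E]
    (hQsq : ∀ x : E, ∃ h1 : Q (Q x) ∈ t.domain, ∃ h2 : t ⟨Q (Q x), h1⟩ ∈ t.adjoint.domain,
      Q (Q x) + t.adjoint ⟨t ⟨Q (Q x), h1⟩, h2⟩ = x) :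
    Function.Injective Q := by
  refine (injective_iff_map_eq_zero Q).2 fun a ha => ?_
  obtain ⟨h1, h2, h⟩ := hQsq a
  simpa [ha, ← ZeroMemClass.zero_def] using h.symm

theorem inner_eq_inner_sq_add_inner_apply_sq [CompleteSpace E]
    (hdense : Dense (t.domain : Set E)) (hQdom : ∀ x, Q x ∈ t.domain)
    (hQsq : ∀ x : E, ∃ h1 : Q (Q x) ∈ t.domain, ∃ h2 : t ⟨Q (Q x), h1⟩ ∈ t.adjoint.domain,
      Q (Q x) + t.adjoint ⟨t ⟨Q (Q x), h1⟩, h2⟩ = x)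
    (w : E) (u : t.domain) :
    ⟪w, u⟫ = ⟪Q (Q w), u⟫ + ⟪t ⟨Q (Q w), hQdom (Q w)⟩, t u⟫ := by
  obtain ⟨h1, h2, hw⟩ := hQsq w
  conv_lhs => rw [← hw]
  rw [inner_add_left, adjoint_isFormalAdjoint hdense]

theorem sq_apply_eq_of_apply_eq_zero (hQ : (Q : E →ₗ[ℂ] E).IsSymmetric)
    (hQdom : ∀ x, Q x ∈ t.domain)
    (hgraph : ∀ (w : E) (u : t.domain),
      ⟪w, u⟫ = ⟪Q (Q w), u⟫ + ⟪t ⟨Q (Q w), hQdom (Q w)⟩, t u⟫)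
    {u : t.domain} (hu : t u = 0) : Q (Q u) = u :=
  ext_inner_left ℂ fun w => by
    rw [hgraph w u, hu, inner_zero_right, add_zero, hQ.apply_clm, hQ.apply_clm]

theorem apply_eq_zero_of_inner_apply_sq_eq_zero (hQ : (Q : E →ₗ[ℂ] E).IsSymmetric)
    (hQdom : ∀ x, Q x ∈ t.domain)
    (hgraph : ∀ (w : E) (u : t.domain),
      ⟪w, u⟫ = ⟪Q (Q w), u⟫ + ⟪t ⟨Q (Q w), hQdom (Q w)⟩, t u⟫)
    (u : t.domain) (h : ∀ w, ⟪t u, t ⟨Q (Q w), hQdom (Q w)⟩⟫ = 0) : t u = 0 := by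
  have hu : Q (Q u) = u := ext_inner_left ℂ fun w => by
    rw [hgraph w u, inner_eq_zero_symm.1 (h w), add_zero, hQ.apply_clm, hQ.apply_clm]
  have key := h u
  rw [show t ⟨Q (Q u), hQdom (Q u)⟩ = t u from congrArg t (Subtype.ext hu)] at key
  exact inner_self_eq_zero.1 key

theorem apply_eq_zero_of_sq_apply_eq (hQ : (Q : E →ₗ[ℂ] E).IsSymmetric)
    (hQdom : ∀ x, Q x ∈ t.domain)
    (hgraph : ∀ (w : E) (u : t.domain),
      ⟪w, u⟫ = ⟪Q (Q w), u⟫ + ⟪t ⟨Q (Q w), hQdom (Q w)⟩, t u⟫)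
    {a : E} (ha : Q (Q a) = a) : t ⟨Q a, hQdom a⟩ = 0 :=
  apply_eq_zero_of_inner_apply_sq_eq_zero hQ hQdom hgraph _ fun w => by
    have h := hgraph w ⟨Q a, hQdom a⟩
    rw [hQ.apply_clm (Q w) (Q a), ha, hQ.apply_clm, left_eq_add] at h
    exact inner_eq_zero_symm.1 h

theorem mem_map_ker_iff_sq_apply_eq (hQ : (Q : E →ₗ[ℂ] E).IsSymmetric)
    (hQdom : ∀ x, Q x ∈ t.domain)
    (hgraph : ∀ (w : E) (u : t.domain),
      ⟪w, u⟫ = ⟪Q (Q w), u⟫ + ⟪t ⟨Q (Q w), hQdom (Q w)⟩, t u⟫)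
    (x : E) : x ∈ (LinearMap.ker t.toFun).map t.domain.subtype ↔ Q (Q x) = x := by
  constructor
  · rintro ⟨u, hu, rfl⟩
    exact sq_apply_eq_of_apply_eq_zero hQ hQdom hgraph hu
  · intro hx
    refine ⟨⟨Q (Q x), hQdom (Q x)⟩, ?_, hx⟩
    exact apply_eq_zero_of_sq_apply_eq hQ hQdom hgraph (a := Q x) (by rw [hx])

theorem apply_eq_zero_iff_sq_apply_eq (hQ : (Q : E →ₗ[ℂ] E).IsSymmetric)
    (hQinj : Function.Injective Q) (hQdom : ∀ x, Q x ∈ t.domain)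
    (hgraph : ∀ (w : E) (u : t.domain),
      ⟪w, u⟫ = ⟪Q (Q w), u⟫ + ⟪t ⟨Q (Q w), hQdom (Q w)⟩, t u⟫)
    (x : E) : t ⟨Q x, hQdom x⟩ = 0 ↔ Q (Q x) = x :=
  ⟨fun h => hQinj (sq_apply_eq_of_apply_eq_zero hQ hQdom hgraph h),
    apply_eq_zero_of_sq_apply_eq hQ hQdom hgraph⟩

theorem mem_orthogonal_range_of_inner_apply_sq_eq_zero [CompleteSpace E]
    (hQ : (Q : E →ₗ[ℂ] E).IsSymmetric)
    (hQdom : ∀ x, Q x ∈ t.domain)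
    (hgraph : ∀ (w : E) (u : t.domain),
      ⟪w, u⟫ = ⟪Q (Q w), u⟫ + ⟪t ⟨Q (Q w), hQdom (Q w)⟩, t u⟫)
    (hran : IsClosed (LinearMap.range t.toFun : Set E))
    {y : E} (hy : ∀ w, ⟪y, t ⟨Q (Q w), hQdom (Q w)⟩⟫ = 0) :
    y ∈ (LinearMap.range t.toFun)ᗮ := by
  have : CompleteSpace (LinearMap.range t.toFun) := hran.completeSpace_coe
  obtain ⟨_, ⟨u, rfl⟩, q, hq, rfl⟩ := (LinearMap.range t.toFun).exists_add_mem_mem_orthogonal y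
  have hu : t u = 0 := apply_eq_zero_of_inner_apply_sq_eq_zero hQ hQdom hgraph u fun w => by
    have h := hy w
    rw [inner_add_left, inner_eq_zero_symm.1 (hq (t ⟨_, hQdom (Q w)⟩) ⟨_, rfl⟩), add_zero] at h
    exact h
  rwa [toFun_eq_coe, hu, zero_add]

end BoundedTransform

theorem index_eq_index_boundedTransform_general
    {E : Type*} [NormedAddCommGroup E] [InnerProductSpace ℂ E] [CompleteSpace E]
    (t : E →ₗ.[ℂ] E) (hdense : Dense (t.domain : Set E))
    (Q : E →L[ℂ] E) (hQpos : Q.IsPositive)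
    (hQdom : ∀ x : E, Q x ∈ t.domain)
    (hQsq : ∀ x : E, ∃ h1 : Q (Q x) ∈ t.domain,
      ∃ h2 : t ⟨Q (Q x), h1⟩ ∈ t.adjoint.domain,
        Q (Q x) + t.adjoint ⟨t ⟨Q (Q x), h1⟩, h2⟩ = x)
    (F : E →L[ℂ] E) (hF : ∀ x : E, F x = t ⟨Q x, hQdom x⟩)
    (hran : IsClosed {y : E | ∃ x : E, ∃ hx : x ∈ t.domain, t ⟨x, hx⟩ = y}) :
    (Module.finrank ℂ ((LinearMap.ker t.toFun).map t.domain.subtype) : ℤ)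
        - Module.finrank ℂ ((LinearMap.ker t.adjoint.toFun).map t.adjoint.domain.subtype)
      = (Module.finrank ℂ (LinearMap.ker (F : E →ₗ[ℂ] E)) : ℤ)
        - Module.finrank ℂ (LinearMap.ker (ContinuousLinearMap.adjoint F : E →ₗ[ℂ] E)) := by
  have hQ : (Q : E →ₗ[ℂ] E).IsSymmetric := hQpos.isSelfAdjoint.isSymmetric
  have hgraph := inner_eq_inner_sq_add_inner_apply_sq hdense hQdom hQsq
  have hran' : IsClosed (LinearMap.range t.toFun : Set E) := by
    convert hran
    ext y
    simp [LinearMap.mem_range]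
  have hker : LinearMap.ker (F : E →ₗ[ℂ] E) = (LinearMap.ker t.toFun).map t.domain.subtype := by
    ext x
    rw [LinearMap.mem_ker, ContinuousLinearMap.coe_coe, hF,
      mem_map_ker_iff_sq_apply_eq hQ hQdom hgraph,
      apply_eq_zero_iff_sq_apply_eq hQ (injective_of_sq_add_adjoint_apply_eq hQsq) hQdom hgraph]
  have hcoker : LinearMap.ker (ContinuousLinearMap.adjoint F : E →ₗ[ℂ] E)
      = (LinearMap.ker t.adjoint.toFun).map t.adjoint.domain.subtype := by
    ext y
    rw [mem_map_ker_adjoint_iff_s13 hdense, ← ContinuousLinearMap.orthogonal_range]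
    refine ⟨fun hy => mem_orthogonal_range_of_inner_apply_sq_eq_zero hQ hQdom hgraph hran'
      fun w => ?_, fun hy => Submodule.orthogonal_le ?_ hy⟩
    · rw [← hF]
      exact Submodule.inner_left_of_mem_orthogonal (LinearMap.mem_range_self _ (Q w)) hy
    · rintro _ ⟨x, rfl⟩
      exact ⟨_, (hF x).symm⟩
  rw [hker, hcoker]

/-- Let `t` be a closed densely defined operator on a Hilbert space `E` with
closed range and finite dimensional kernel and cokernel.  Then
`ind t := dim Ker t − dim Ker t*` equals `ind F_t`, the index of its bounded transform. -/
theorem index_eq_index_boundedTransform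
    {E : Type*} [NormedAddCommGroup E] [InnerProductSpace ℂ E] [CompleteSpace E]
    (t : E →ₗ.[ℂ] E) (hdense : Dense (t.domain : Set E)) (hclosed : t.IsClosed)
    (Q : E →L[ℂ] E) (hQpos : Q.IsPositive)
    (hQdom : ∀ x : E, Q x ∈ t.domain)
    (hQsq : ∀ x : E, ∃ h1 : Q (Q x) ∈ t.domain,
      ∃ h2 : t ⟨Q (Q x), h1⟩ ∈ t.adjoint.domain,
        Q (Q x) + t.adjoint ⟨t ⟨Q (Q x), h1⟩, h2⟩ = x)
    (F : E →L[ℂ] E) (hF : ∀ x : E, F x = t ⟨Q x, hQdom x⟩)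
    (hran : IsClosed {y : E | ∃ x : E, ∃ hx : x ∈ t.domain, t ⟨x, hx⟩ = y})
    (hker : FiniteDimensional ℂ ((LinearMap.ker t.toFun).map t.domain.subtype))
    (hcoker : FiniteDimensional ℂ ((LinearMap.ker t.adjoint.toFun).map t.adjoint.domain.subtype)) :
    (Module.finrank ℂ ((LinearMap.ker t.toFun).map t.domain.subtype) : ℤ)
        - Module.finrank ℂ ((LinearMap.ker t.adjoint.toFun).map t.adjoint.domain.subtype)
      = (Module.finrank ℂ (LinearMap.ker (F : E →ₗ[ℂ] E)) : ℤ)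
        - Module.finrank ℂ (LinearMap.ker (ContinuousLinearMap.adjoint F : E →ₗ[ℂ] E)) :=
  index_eq_index_boundedTransform_general t hdense Q hQpos hQdom hQsq F hF hran
end

section
/- Let E be a Hilbert space and T a bounded operator on E. Then T is Fredholm of index 0 if and only if T = U + K where U is invertible and K is compact. -/
/-!
If `T` has closed range, then `range T = (ker T†)ᗮ`; when moreover `dim ker T = dim ker T† < ∞`,
adding to `T` a linear isomorphism `ker T ≃ ker T†` precomposed with the orthogonal projection
onto `ker T` produces a bijective, hence invertible, operator, and the added term has finite rank.

Conversely, a compact `K` is a norm limit of finite-rank operators and the invertible operators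
form an open set, so `U + K = V + F = V (1 + V⁻¹ F)` with `V` invertible and `F` of finite rank.
The operator `1 + F` leaves the finite-dimensional subspace `M = range F + range F†` invariant and
is the identity on `Mᗮ`, and so is its adjoint. Hence `range (1 + F) = Mᗮ + (1 + F) M` is closed,
and both kernels lie in `M`, where they are the kernels of the restriction of `1 + F` to `M` and
of its adjoint, which have the same dimension by rank–nullity.
-/

open ContinuousLinearMap Submodule Module

theorem LinearMap.finrank_ker_restrict {R N : Type*} [Ring R] [AddCommGroup N] [Module R N]
    {f : N →ₗ[R] N} {M : Submodule R N} (hM : ∀ x ∈ M, f x ∈ M) (hker : f.ker ≤ M) :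
    finrank R (f.restrict hM).ker = finrank R f.ker := by
  rw [ker_restrict]
  exact (comapSubtypeEquivOfLe hker).finrank_eq

section

variable {𝕜 E : Type*} [RCLike 𝕜] [NormedAddCommGroup E] [InnerProductSpace 𝕜 E]

theorem LinearMap.finrank_ker_adjoint [FiniteDimensional 𝕜 E] (A : E →ₗ[𝕜] E) :
    finrank 𝕜 A.adjoint.ker = finrank 𝕜 A.ker := by
  have := FiniteDimensional.complete 𝕜 E
  have h₁ := A.range.finrank_add_finrank_orthogonal
  have h₂ := A.finrank_range_add_finrank_ker
  rw [LinearMap.orthogonal_range] at h₁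
  omega

theorem Submodule.norm_sub_starProjection_le (U : Submodule 𝕜 E) [U.HasOrthogonalProjection]
    (y : E) {w : E} (hw : w ∈ U) : ‖y - U.starProjection y‖ ≤ ‖y - w‖ := by
  rw [starProjection_minimal]
  exact ciInf_le ⟨0, Set.forall_mem_range.mpr fun _ => norm_nonneg _⟩ (⟨w, hw⟩ : U)

theorem IsCompactOperator.exists_finiteDimensional_range_norm_sub_lt {X : Type*}
    [NormedAddCommGroup X] [NormedSpace 𝕜 X] {K : X →L[𝕜] E} (hK : IsCompactOperator K)
    {ε : ℝ} (hε : 0 < ε) :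
    ∃ F : X →L[𝕜] E, FiniteDimensional 𝕜 F.range ∧ ‖K - F‖ < ε := by
  obtain ⟨t, ht, hnet⟩ := Metric.totallyBounded_iff.mp
    ((hK.isCompact_closure_image_closedBall 1).totallyBounded.subset subset_closure) (ε / 2)
    (half_pos hε)
  have : FiniteDimensional 𝕜 (span 𝕜 t) := FiniteDimensional.span_of_finite 𝕜 ht
  refine ⟨(span 𝕜 t).starProjection ∘L K, ?_, ?_⟩
  · refine finiteDimensional_of_le (S₂ := span 𝕜 t) ?_
    rintro _ ⟨x, rfl⟩
    exact (span 𝕜 t).starProjection_apply_mem (K x)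
  refine (opNorm_le_of_unit_norm (half_pos hε).le fun x hx => ?_).trans_lt (half_lt_self hε)
  obtain ⟨y, hy, hxy⟩ := Set.mem_iUnion₂.mp (hnet ⟨x, by simp [hx], rfl⟩)
  calc ‖(K - (span 𝕜 t).starProjection ∘L K) x‖ = ‖K x - (span 𝕜 t).starProjection (K x)‖ := rfl
    _ ≤ ‖K x - y‖ := (span 𝕜 t).norm_sub_starProjection_le _ (subset_span hy)
    _ ≤ ε / 2 := (mem_ball_iff_norm.mp hxy).le

namespace ContinuousLinearMap

theorem range_eq_orthogonal_sup_map {T : E →L[𝕜] E} {M : Submodule 𝕜 E}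
    [M.HasOrthogonalProjection] (hT : ∀ x ∈ Mᗮ, T x = x) :
    T.range = Mᗮ ⊔ M.map (T : E →ₗ[𝕜] E) := by
  refine le_antisymm ?_ (sup_le (fun x hx => ⟨x, hT x hx⟩) LinearMap.map_le_range)
  rintro _ ⟨x, rfl⟩
  obtain ⟨m, hm, n, hn, rfl⟩ := M.exists_add_mem_mem_orthogonal x
  rw [map_add, coe_coe, hT n hn, add_comm]
  exact add_mem_sup hn (mem_map_of_mem hm)

variable [CompleteSpace E]

theorem range_eq_orthogonal_ker_adjoint {T : E →L[𝕜] E} (hT : IsClosed (Set.range T)) :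
    T.range = (adjoint T).kerᗮ := by
  have : CompleteSpace T.range := (show IsClosed (T.range : Set E) by simpa).completeSpace_coe
  rw [← orthogonal_range, orthogonal_orthogonal]

theorem finiteDimensional_range_adjoint (F : E →L[𝕜] E) [FiniteDimensional 𝕜 F.range] :
    FiniteDimensional 𝕜 (adjoint F).range := by
  suffices (adjoint F).range ≤ F.range.map (adjoint F : E →ₗ[𝕜] E) from
    finiteDimensional_of_le this
  rintro _ ⟨y, rfl⟩
  obtain ⟨a, ha, b, hb, rfl⟩ := F.range.exists_add_mem_mem_orthogonal y
  rw [orthogonal_range] at hb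
  refine ⟨a, ha, ?_⟩
  simpa using hb

section Invariant

variable {T : E →L[𝕜] E} {M : Submodule 𝕜 E}

theorem adjoint_apply_eq_self_of_mem_orthogonal [M.HasOrthogonalProjection]
    (hM : ∀ x ∈ M, T x ∈ M) (hT : ∀ x ∈ Mᗮ, T x = x) {x : E} (hx : x ∈ Mᗮ) :
    adjoint T x = x := by
  refine ext_inner_right 𝕜 fun y => ?_
  obtain ⟨m, hm, n, hn, rfl⟩ := M.exists_add_mem_mem_orthogonal y
  rw [adjoint_inner_left, map_add, hT n hn, inner_add_right, inner_add_right,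
    inner_left_of_mem_orthogonal (hM m hm) hx, inner_left_of_mem_orthogonal hm hx]

theorem adjoint_apply_mem_of_mem [M.HasOrthogonalProjection] (hT : ∀ x ∈ Mᗮ, T x = x)
    {x : E} (hx : x ∈ M) : adjoint T x ∈ M := by
  rw [← M.orthogonal_orthogonal]
  intro y hy
  rw [adjoint_inner_right, hT y hy]
  exact inner_left_of_mem_orthogonal hx hy

theorem ker_le_of_adjoint_apply_eq_self [M.HasOrthogonalProjection]
    (hT : ∀ x ∈ Mᗮ, adjoint T x = x) : T.ker ≤ M := by
  intro x hx
  rw [← M.orthogonal_orthogonal]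
  intro y hy
  rw [← hT y hy, adjoint_inner_left, show T x = 0 from hx, inner_zero_right]

theorem adjoint_restrict [FiniteDimensional 𝕜 M] (hM : ∀ x ∈ M, T x ∈ M)
    (hM' : ∀ x ∈ M, adjoint T x ∈ M) :
    LinearMap.adjoint ((T : E →ₗ[𝕜] E).restrict hM) = (adjoint T : E →ₗ[𝕜] E).restrict hM' := by
  refine ((LinearMap.eq_adjoint_iff _ _).mpr fun x y => ?_).symm
  exact adjoint_inner_left T (y : E) (x : E)

end Invariant

def IsFredholmIndexZero (T : E →L[𝕜] E) : Prop :=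
  IsClosed (Set.range T) ∧ FiniteDimensional 𝕜 T.ker ∧ FiniteDimensional 𝕜 (adjoint T).ker ∧
    finrank 𝕜 T.ker = finrank 𝕜 (adjoint T).ker

theorem isUnit_add_subtypeL_comp_orthogonalProjectionOnto_ker {T : E →L[𝕜] E}
    (hT : IsClosed (Set.range T)) [FiniteDimensional 𝕜 T.ker] (J : T.ker ≃L[𝕜] (adjoint T).ker) :
    IsUnit (T + (adjoint T).ker.subtypeL ∘L (J : T.ker →L[𝕜] (adjoint T).ker) ∘L
      T.ker.orthogonalProjectionOnto) := by
  set P := T.ker.orthogonalProjectionOnto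
  have hrange := range_eq_orthogonal_ker_adjoint hT
  rw [isUnit_iff_bijective]
  constructor
  · refine (injective_iff_map_eq_zero _).mpr fun x hx => ?_
    have hTx : T x = -(J (P x) : E) := eq_neg_of_add_eq_zero_left hx
    have hTx₀ : T x = 0 := by
      refine disjoint_def.mp (adjoint T).ker.orthogonal_disjoint _ ?_ (hrange ▸ ⟨x, rfl⟩)
      rw [hTx]
      exact neg_mem (J (P x)).2
    have hPx : P x = 0 := by simpa [hTx₀] using hTx
    rw [← T.ker.starProjection_eq_self_iff.mpr hTx₀, starProjection_apply, hPx, coe_zero]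
  · intro y
    obtain ⟨c, hc, d, hd, rfl⟩ := (adjoint T).ker.exists_add_mem_mem_orthogonal y
    obtain ⟨x, rfl⟩ : d ∈ T.range := hrange ▸ hd
    refine ⟨x - P x + J.symm ⟨c, hc⟩, ?_⟩
    have hTP : T (P x) = 0 := (P x).2
    have hTJ : T (J.symm ⟨c, hc⟩) = 0 := (J.symm ⟨c, hc⟩).2
    have hPP : P (P x) = P x := orthogonalProjectionOnto_mem_subspace_eq_self _
    have hPJ : P (J.symm ⟨c, hc⟩) = J.symm ⟨c, hc⟩ :=
      orthogonalProjectionOnto_mem_subspace_eq_self _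
    simp only [add_apply, comp_apply, map_add, map_sub, hTP, hTJ, hPP, hPJ]
    simp [add_comm]

theorem IsFredholmIndexZero.exists_isUnit_isCompactOperator_eq_add {T : E →L[𝕜] E}
    (h : T.IsFredholmIndexZero) :
    ∃ U K : E →L[𝕜] E, IsUnit U ∧ IsCompactOperator K ∧ T = U + K := by
  obtain ⟨hT, _, _, hidx⟩ := h
  let J : T.ker ≃L[𝕜] (adjoint T).ker := .ofFinrankEq hidx
  let K : E →L[𝕜] E :=
    (adjoint T).ker.subtypeL ∘L (J : T.ker →L[𝕜] (adjoint T).ker) ∘L T.ker.orthogonalProjectionOnto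
  have hK : IsCompactOperator K :=
    (isCompactOperator_of_locallyCompactSpace_dom (J.toContinuousLinearMap ∘L
      T.ker.orthogonalProjectionOnto)).clm_comp (adjoint T).ker.subtypeL
  exact ⟨T + K, -K, isUnit_add_subtypeL_comp_orthogonalProjectionOnto_ker hT J, hK.neg, by abel⟩

theorem isFredholmIndexZero_of_finiteDimensional_invariant {T : E →L[𝕜] E}
    {M : Submodule 𝕜 E} [FiniteDimensional 𝕜 M] (hM : ∀ x ∈ M, T x ∈ M)
    (hT : ∀ x ∈ Mᗮ, T x = x) : T.IsFredholmIndexZero := by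
  have hM' : ∀ x ∈ M, adjoint T x ∈ M := fun x => adjoint_apply_mem_of_mem hT
  have hT' : ∀ x ∈ Mᗮ, adjoint T x = x := fun x => adjoint_apply_eq_self_of_mem_orthogonal hM hT
  have hker : T.ker ≤ M := ker_le_of_adjoint_apply_eq_self hT'
  have hker' : (adjoint T).ker ≤ M := ker_le_of_adjoint_apply_eq_self (by simpa using hT)
  refine ⟨?_, finiteDimensional_of_le hker, finiteDimensional_of_le hker', ?_⟩
  · have := isClosed_sup_finiteDimensional _ (M.map (T : E →ₗ[𝕜] E)) M.isClosed_orthogonal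
    rwa [← range_eq_orthogonal_sup_map hT, LinearMap.coe_range, coe_coe] at this
  · rw [← LinearMap.finrank_ker_restrict hM hker, ← LinearMap.finrank_ker_restrict hM' hker',
      ← adjoint_restrict hM hM', LinearMap.finrank_ker_adjoint]

theorem isFredholmIndexZero_one_add (F : E →L[𝕜] E) [FiniteDimensional 𝕜 F.range] :
    (1 + F).IsFredholmIndexZero := by
  have := F.finiteDimensional_range_adjoint
  refine isFredholmIndexZero_of_finiteDimensional_invariant (M := F.range ⊔ (adjoint F).range)
    (fun x hx => add_mem hx (mem_sup_left (LinearMap.mem_range_self _ x))) fun x hx => ?_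
  have hFx : F x = 0 := by
    rw [← inner_self_eq_zero (𝕜 := 𝕜), ← adjoint_inner_right]
    exact inner_left_of_mem_orthogonal (mem_sup_right (LinearMap.mem_range_self _ (F x))) hx
  simp [hFx]

theorem IsFredholmIndexZero.isUnit_mul {V S : E →L[𝕜] E} (hV : IsUnit V)
    (h : S.IsFredholmIndexZero) : (V * S).IsFredholmIndexZero := by
  obtain ⟨hS, hfin, _, hidx⟩ := h
  obtain ⟨u, rfl⟩ := hV
  let e := ContinuousLinearEquiv.unitsEquiv 𝕜 E u
  let e' := (ContinuousLinearEquiv.unitsEquiv 𝕜 E (star u)).toLinearEquiv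
  have hker : (↑u * S : E →L[𝕜] E).ker = S.ker := LinearEquiv.ker_comp e.toLinearEquiv _
  have hker' : (adjoint (↑u * S : E →L[𝕜] E)).ker = (adjoint S).ker.map (e'.symm : E →ₗ[𝕜] E) := by
    rw [← star_eq_adjoint, star_mul, star_eq_adjoint, ← comap_equiv_eq_map_symm]
    exact LinearMap.ker_comp _ _
  refine ⟨?_, hker ▸ hfin, hker' ▸ inferInstance, ?_⟩
  · rw [show Set.range (↑u * S : E →L[𝕜] E) = e '' Set.range S from Set.range_comp e S]
    exact e.toHomeomorph.isClosedMap _ hS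
  · rw [hker, hker', hidx, LinearEquiv.finrank_map_eq]

theorem isFredholmIndexZero_isUnit_add_isCompactOperator {U K : E →L[𝕜] E} (hU : IsUnit U)
    (hK : IsCompactOperator K) : (U + K).IsFredholmIndexZero := by
  obtain ⟨u, rfl⟩ := hU
  obtain ⟨ε, hε, hball⟩ := Metric.mem_nhds_iff.mp (Units.nhds u)
  obtain ⟨F, _, hKF⟩ := hK.exists_finiteDimensional_range_norm_sub_lt hε
  obtain ⟨v, hv⟩ : IsUnit (↑u + (K - F)) := hball (by simpa [dist_eq_norm] using hKF)
  have : FiniteDimensional 𝕜 (↑v⁻¹ * F : E →L[𝕜] E).range :=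
    LinearMap.range_comp (F : E →ₗ[𝕜] E) ((↑v⁻¹ : E →L[𝕜] E) : E →ₗ[𝕜] E) ▸ inferInstance
  have hfactor : ↑u + K = ↑v * (1 + ↑v⁻¹ * F) := by
    rw [mul_add, mul_one, ← mul_assoc, Units.mul_inv, one_mul, hv]
    abel
  rw [hfactor]
  exact (isFredholmIndexZero_one_add _).isUnit_mul v.isUnit

end ContinuousLinearMap

end

/-- A bounded operator `T` on a Hilbert space `E` is Fredholm of index `0`
if and only if `T = U + K` with `U` invertible and `K` compact. -/
theorem fredholm_index_zero_iff_invertible_add_compact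
    {E : Type*} [NormedAddCommGroup E] [InnerProductSpace ℂ E] [CompleteSpace E]
    (T : E →L[ℂ] E) :
    (IsClosed (Set.range ⇑T) ∧ FiniteDimensional ℂ (LinearMap.ker (T : E →ₗ[ℂ] E)) ∧
        FiniteDimensional ℂ (LinearMap.ker (ContinuousLinearMap.adjoint T : E →ₗ[ℂ] E)) ∧
        Module.finrank ℂ (LinearMap.ker (T : E →ₗ[ℂ] E))
          = Module.finrank ℂ (LinearMap.ker (ContinuousLinearMap.adjoint T : E →ₗ[ℂ] E))) ↔
      ∃ U K : E →L[ℂ] E, IsUnit U ∧ IsCompactOperator ⇑K ∧ T = U + K :=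
  ⟨IsFredholmIndexZero.exists_isUnit_isCompactOperator_eq_add,
    fun ⟨_, _, hU, hK, hT⟩ => hT ▸ isFredholmIndexZero_isUnit_add_isCompactOperator hU hK⟩
end
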